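/- arXiv:1301.7724 — 2 statements merged into one kernel-verified Lean document; each statement's English description precedes it below -/
import Mathlib

section
/- The reciprocal clustering output is a valid ultrametric: for a finite asymmetric network (X, A_X), the function u^R_X(x,x') = min over chains C(x,x') of the max over consecutive pairs of max(A_X(x_i,x_{i+1}), A_X(x_{i+1},x_i)) satisfies the strong triangle inequality u^R_X(x,x') ≤ max(u^R_X(x,x''), u^R_X(x'',x')) for all x, x', x'' in X. -/
/-- Maximum dissimilarity over consecutive links of a chain (list of nodes). -/
def listCost {X : Type*} (A : X → X → ℝ) (l : List X) : ℝ :=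
  (l.zip l.tail).foldr (fun p r => max (A p.1 p.2) r) 0

/-- Minimum over chains from `x` to `x'` of the maximum link cost. -/
noncomputable def minChainCost {X : Type*} (A : X → X → ℝ) (x x' : X) : ℝ :=
  sInf {c : ℝ | ∃ l : List X, l.head? = some x ∧ l.getLast? = some x' ∧ listCost A l = c}

/-- Symmetrized dissimilarity Ā. -/
def symDis {X : Type*} (A : X → X → ℝ) (x x' : X) : ℝ := max (A x x') (A x' x)

/-- Reciprocal ultrametric. -/
noncomputable def uR {X : Type*} (A : X → X → ℝ) (x x' : X) : ℝ := minChainCost (symDis A) x x'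

/-- Nonreciprocal ultrametric. -/
noncomputable def uNR {X : Type*} (A : X → X → ℝ) (x x' : X) : ℝ :=
  max (minChainCost A x x') (minChainCost A x' x)

/-- A (finite, asymmetric) network dissimilarity: nonnegative, vanishing exactly on the diagonal. -/
def IsNetwork {X : Type*} (A : X → X → ℝ) : Prop :=
  (∀ x x', 0 ≤ A x x') ∧ (∀ x x', A x x' = 0 ↔ x = x')

/-- Ultrametric: nonnegative, symmetric, identity of indiscernibles, strong triangle inequality. -/
def IsUltra {X : Type*} (u : X → X → ℝ) : Prop :=
  (∀ x x', 0 ≤ u x x') ∧ (∀ x x', u x x' = u x' x) ∧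
  (∀ x x', u x x' = 0 ↔ x = x') ∧
  (∀ x x' x'', u x x' ≤ max (u x x'') (u x'' x'))

/-! Concatenating a chain from `x` to `x''` with one from `x''` to `x'` gives a chain from `x` to
`x'` whose largest link is the larger of the two largest links; taking near-optimal chains on both
sides yields the strong triangle inequality for the min–max chain cost of any dissimilarity, in
particular for the symmetrized one. -/

lemma List.getLast?_append_tail_of_getLast?_eq_head? {α : Type*} {l₁ l₂ : List α}
    (h : l₁.getLast? = l₂.head?) : (l₁ ++ l₂.tail).getLast? = l₂.getLast? := by
  rcases l₂ with _ | ⟨b, _ | ⟨c, t⟩⟩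
  · simpa using h
  · simpa using h
  · simp [List.getLast?_append, List.getLast?_cons]

section ChainCost

variable {X : Type*} (A : X → X → ℝ)

lemma listCost_nonneg (l : List X) : 0 ≤ listCost A l := by
  unfold listCost
  induction l.zip l.tail with
  | nil => exact le_rfl
  | cons p t ih => exact ih.trans (le_max_right _ _)

lemma listCost_cons_cons (a b : X) (t : List X) :
    listCost A (a :: b :: t) = max (A a b) (listCost A (b :: t)) := rfl

lemma listCost_append_tail_le :
    ∀ l₁ l₂ : List X, l₁.getLast? = l₂.head? →
      listCost A (l₁ ++ l₂.tail) ≤ max (listCost A l₁) (listCost A l₂)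
  | [], [], _ => by simp [listCost]
  | [a], b :: t, h => by
      obtain rfl : a = b := by simpa using h
      simp
  | a :: b :: t, l₂, h => by
      have ih := listCost_append_tail_le (b :: t) l₂ (by simpa using h)
      calc listCost A (a :: b :: t ++ l₂.tail)
          = max (A a b) (listCost A (b :: t ++ l₂.tail)) := rfl
        _ ≤ max (A a b) (max (listCost A (b :: t)) (listCost A l₂)) := max_le_max_left _ ih
        _ = max (listCost A (a :: b :: t)) (listCost A l₂) := by
            rw [listCost_cons_cons, max_assoc]

lemma minChainCost_le_listCost {x x' : X} {l : List X} (hx : l.head? = some x)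
    (hx' : l.getLast? = some x') : minChainCost A x x' ≤ listCost A l :=
  csInf_le ⟨0, by rintro _ ⟨l, -, -, rfl⟩; exact listCost_nonneg A l⟩ ⟨l, hx, hx', rfl⟩

lemma exists_listCost_lt_minChainCost_add (x x' : X) {ε : ℝ} (hε : 0 < ε) :
    ∃ l : List X, l.head? = some x ∧ l.getLast? = some x' ∧
      listCost A l < minChainCost A x x' + ε := by
  obtain ⟨_, ⟨l, hx, hx', rfl⟩, hlt⟩ :=
    Real.lt_sInf_add_pos (s := {c | ∃ l : List X, l.head? = some x ∧ l.getLast? = some x' ∧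
      listCost A l = c}) ⟨_, [x, x'], rfl, rfl, rfl⟩ hε
  exact ⟨l, hx, hx', hlt⟩

theorem minChainCost_le_max (x x' x'' : X) :
    minChainCost A x x' ≤ max (minChainCost A x x'') (minChainCost A x'' x') := by
  refine le_of_forall_pos_le_add fun ε hε => ?_
  obtain ⟨l₁, hl₁x, hl₁x'', hl₁⟩ := exists_listCost_lt_minChainCost_add A x x'' hε
  obtain ⟨l₂, hl₂x'', hl₂x', hl₂⟩ := exists_listCost_lt_minChainCost_add A x'' x' hε
  have hjoin : l₁.getLast? = l₂.head? := hl₁x''.trans hl₂x''.symm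
  have hx : (l₁ ++ l₂.tail).head? = some x := by simp [List.head?_append, hl₁x]
  have hx' : (l₁ ++ l₂.tail).getLast? = some x' :=
    (List.getLast?_append_tail_of_getLast?_eq_head? hjoin).trans hl₂x'
  calc minChainCost A x x'
      ≤ listCost A (l₁ ++ l₂.tail) := minChainCost_le_listCost A hx hx'
    _ ≤ max (listCost A l₁) (listCost A l₂) := listCost_append_tail_le A l₁ l₂ hjoin
    _ ≤ max (minChainCost A x x'' + ε) (minChainCost A x'' x' + ε) := max_le_max hl₁.le hl₂.le
    _ = max (minChainCost A x x'') (minChainCost A x'' x') + ε := max_add_add_right _ _ _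

end ChainCost

theorem reciprocal_strong_triangle_general {X : Type*} (A : X → X → ℝ) :
    ∀ x x' x'' : X, uR A x x' ≤ max (uR A x x'') (uR A x'' x') :=
  minChainCost_le_max (symDis A)

theorem reciprocal_strong_triangle {X : Type*} [Fintype X] (A : X → X → ℝ)
    (hA : IsNetwork A) :
    ∀ x x' x'' : X, uR A x x' ≤ max (uR A x x'') (uR A x'' x') :=
  reciprocal_strong_triangle_general A
end

section
/- The reciprocal ultrametric u^R_X is the maximal ultrametric u on X satisfying u(x,x') ≤ Ā_X(x,x') for all x, x'; equivalently, any ultrametric u with u(x,x') ≤ Ā_X(x,x') for all x,x' satisfies u(x,x') ≤ u^R_X(x,x') for all x,x'. -/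
namespace RecUltraAux

variable {X : Type*}

lemma listCost_cons (B : X → X → ℝ) (a b : X) (t : List X) :
    listCost B (a :: b :: t) = max (B a b) (listCost B (b :: t)) := rfl

lemma listCost_nonneg (B : X → X → ℝ) : ∀ l : List X, 0 ≤ listCost B l
  | [] => le_refl _
  | [_] => le_refl _
  | a :: b :: t =>
    le_trans (listCost_nonneg B (b :: t)) (by rw [listCost_cons]; exact le_max_right _ _)

/-- The chain set. -/
def S (B : X → X → ℝ) (x x' : X) : Set ℝ :=
  {c : ℝ | ∃ l : List X, l.head? = some x ∧ l.getLast? = some x' ∧ listCost B l = c}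

lemma minChainCost_eq (B : X → X → ℝ) (x x' : X) : minChainCost B x x' = sInf (S B x x') := rfl

lemma S_nonempty (B : X → X → ℝ) (x x' : X) : (S B x x').Nonempty :=
  ⟨listCost B [x, x'], [x, x'], rfl, rfl, rfl⟩

lemma S_bddBelow (B : X → X → ℝ) (x x' : X) : BddBelow (S B x x') := by
  refine ⟨0, fun c hc => ?_⟩
  obtain ⟨l, _, _, hl⟩ := hc
  exact hl ▸ listCost_nonneg B l

lemma listCost_val (B : X → X → ℝ) :
    ∀ l : List X, listCost B l = 0 ∨ ∃ p : X × X, listCost B l = B p.1 p.2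
  | [] => Or.inl rfl
  | [_] => Or.inl rfl
  | a :: b :: t => by
    rw [listCost_cons]
    rcases max_choice (B a b) (listCost B (b :: t)) with h | h
    · exact Or.inr ⟨(a, b), h⟩
    · rw [h]; exact listCost_val B (b :: t)

lemma S_finite [Fintype X] (B : X → X → ℝ) (x x' : X) : (S B x x').Finite := by
  apply Set.Finite.subset ((Set.finite_range fun p : X × X => B p.1 p.2).insert 0)
  rintro c ⟨l, _, _, hl⟩
  rcases listCost_val B l with h | ⟨p, h⟩
  · exact Or.inl (hl.symm.trans h)
  · exact Or.inr ⟨p, h.symm.trans hl⟩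

lemma minChainCost_mem [Fintype X] (B : X → X → ℝ) (x x' : X) :
    minChainCost B x x' ∈ S B x x' :=
  (S_nonempty B x x').csInf_mem (S_finite B x x')

lemma minChainCost_le (B : X → X → ℝ) {x x' : X} {c : ℝ} (hc : c ∈ S B x x') :
    minChainCost B x x' ≤ c :=
  csInf_le (S_bddBelow B x x') hc

lemma minChainCost_nonneg (B : X → X → ℝ) (x x' : X) : 0 ≤ minChainCost B x x' :=
  le_csInf (S_nonempty B x x') fun c hc => by
    obtain ⟨l, _, _, hl⟩ := hc; exact hl ▸ listCost_nonneg B l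

lemma listCost_append_last (B : X → X → ℝ) :
    ∀ (l : List X) (z y : X), l.getLast? = some z →
      listCost B (l ++ [y]) = max (listCost B l) (B z y)
  | [], z, y, h => by simp at h
  | [a], z, y, h => by
    simp only [List.getLast?_singleton, Option.some.injEq] at h
    subst h
    show max (B a y) 0 = max 0 (B a y)
    exact max_comm _ _
  | a :: b :: t, z, y, h => by
    have h' : (b :: t).getLast? = some z := by
      rwa [List.getLast?_cons_cons] at h
    show listCost B (a :: b :: (t ++ [y])) = _
    rw [listCost_cons,
      show (b :: (t ++ [y])) = (b :: t) ++ [y] from rfl,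
      listCost_append_last B (b :: t) z y h', listCost_cons, max_assoc]

lemma listCost_reverse (B : X → X → ℝ) (hB : ∀ a b, B a b = B b a) :
    ∀ l : List X, listCost B l.reverse = listCost B l
  | [] => rfl
  | [_] => rfl
  | a :: b :: t => by
    have hrev : (a :: b :: t).reverse = (b :: t).reverse ++ [a] := by simp
    have hlast : (b :: t).reverse.getLast? = some b := by
      rw [List.getLast?_reverse]; rfl
    rw [hrev, listCost_append_last B _ b a hlast, listCost_reverse B hB (b :: t),
      listCost_cons, hB b a, max_comm]

lemma listCost_glue (B : X → X → ℝ) :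
    ∀ (l1 l2 : List X) (z : X), l1.getLast? = some z → l2.head? = some z →
      listCost B (l1 ++ l2.tail) ≤ max (listCost B l1) (listCost B l2)
  | [], _, z, h, _ => by simp at h
  | [a], l2, z, h, h2 => by
    simp only [List.getLast?_singleton, Option.some.injEq] at h
    subst h
    have : l2 = a :: l2.tail := by
      cases l2 with
      | nil => simp at h2
      | cons c t => simp only [List.head?_cons, Option.some.injEq] at h2; rw [h2]; rfl
    rw [show ([a] ++ l2.tail) = a :: l2.tail from rfl, ← this]
    exact le_max_right _ _
  | a :: b :: t, l2, z, h, h2 => by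
    have h' : (b :: t).getLast? = some z := by rwa [List.getLast?_cons_cons] at h
    have IH := listCost_glue B (b :: t) l2 z h' h2
    show listCost B (a :: b :: (t ++ l2.tail)) ≤ _
    rw [listCost_cons, listCost_cons, max_assoc]
    exact max_le_max (le_refl _) IH

lemma listCost_zero (B : X → X → ℝ) (hB0 : ∀ a b, 0 ≤ B a b)
    (hBz : ∀ a b : X, B a b = 0 → a = b) :
    ∀ (l : List X) (x x' : X), l.head? = some x → l.getLast? = some x' →
      listCost B l = 0 → x = x'
  | [], x, x', h, _, _ => by simp at h
  | [a], x, x', h, h', _ => by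
    simp only [List.head?_cons, List.getLast?_singleton, Option.some.injEq] at h h'
    rw [← h, ← h']
  | a :: b :: t, x, x', h, h', hc => by
    simp only [List.head?_cons, Option.some.injEq] at h
    rw [List.getLast?_cons_cons] at h'
    rw [listCost_cons] at hc
    have h1 : B a b = 0 :=
      le_antisymm (hc ▸ le_max_left _ _) (hB0 a b)
    have h2 : listCost B (b :: t) = 0 :=
      le_antisymm (hc ▸ le_max_right _ _) (listCost_nonneg B _)
    have := listCost_zero B hB0 hBz (b :: t) b x' rfl h' h2
    rw [← h, hBz a b h1, this]

lemma ultra_le_listCost {u B : X → X → ℝ} (hu : IsUltra u) (hle : ∀ a b, u a b ≤ B a b) :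
    ∀ (l : List X) (x x' : X), l.head? = some x → l.getLast? = some x' →
      u x x' ≤ listCost B l
  | [], x, x', h, _ => by simp at h
  | [a], x, x', h, h' => by
    simp only [List.head?_cons, List.getLast?_singleton, Option.some.injEq] at h h'
    rw [← h, ← h']
    exact le_of_eq ((hu.2.2.1 a a).mpr rfl)
  | a :: b :: t, x, x', h, h' => by
    simp only [List.head?_cons, Option.some.injEq] at h
    rw [List.getLast?_cons_cons] at h'
    have IH := ultra_le_listCost hu hle (b :: t) b x' rfl h'
    rw [← h, listCost_cons]
    calc u a x' ≤ max (u a b) (u b x') := hu.2.2.2 a x' b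
      _ ≤ max (B a b) (listCost B (b :: t)) := max_le_max (hle a b) IH

end RecUltraAux

theorem reciprocal_is_maximal_dominated_ultrametric {X : Type*} [Fintype X]
    (A : X → X → ℝ) (hA : IsNetwork A) :
    (IsUltra (uR A) ∧ ∀ x x' : X, uR A x x' ≤ symDis A x x') ∧
    (∀ u : X → X → ℝ, IsUltra u → (∀ x x' : X, u x x' ≤ symDis A x x') →
      ∀ x x' : X, u x x' ≤ uR A x x') := by
  open RecUltraAux in
  obtain ⟨hA0, hAz⟩ := hA
  set B := symDis A with hB
  have hBsymm : ∀ a b, B a b = B b a := fun a b => max_comm _ _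
  have hB0 : ∀ a b, 0 ≤ B a b := fun a b => le_trans (hA0 a b) (le_max_left _ _)
  have hBz : ∀ a b : X, B a b = 0 → a = b := by
    intro a b h
    have : A a b = 0 := le_antisymm (h ▸ le_max_left _ _) (hA0 a b)
    exact (hAz a b).mp this
  have huR : ∀ x x', uR A x x' = minChainCost B x x' := fun _ _ => rfl
  -- domination
  have hdom : ∀ x x' : X, uR A x x' ≤ B x x' := by
    intro x x'
    rw [huR]
    have : listCost B [x, x'] = B x x' := by
      show max (B x x') 0 = B x x'
      exact max_eq_left (hB0 x x')
    exact minChainCost_le B ⟨[x, x'], rfl, rfl, this⟩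
  -- symmetry
  have hsymm : ∀ x x', uR A x x' = uR A x' x := by
    intro x x'
    rw [huR, huR, minChainCost_eq, minChainCost_eq]
    congr 1
    ext c
    constructor <;> rintro ⟨l, h1, h2, h3⟩ <;>
      exact ⟨l.reverse, by rwa [List.head?_reverse], by rwa [List.getLast?_reverse],
        by rwa [listCost_reverse B hBsymm]⟩
  -- nonneg
  have hnn : ∀ x x', 0 ≤ uR A x x' := fun x x' => minChainCost_nonneg B x x'
  -- identity of indiscernibles
  have hid : ∀ x x' : X, uR A x x' = 0 ↔ x = x' := by
    intro x x'
    constructor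
    · intro h
      obtain ⟨l, h1, h2, h3⟩ := minChainCost_mem B x x'
      exact listCost_zero B hB0 hBz l x x' h1 h2 (h3.trans h)
    · rintro rfl
      refine le_antisymm ?_ (hnn x x)
      exact minChainCost_le B ⟨[x], rfl, rfl, rfl⟩
  -- strong triangle inequality
  have htri : ∀ x x' x'' : X, uR A x x' ≤ max (uR A x x'') (uR A x'' x') := by
    intro x x' x''
    obtain ⟨l1, h11, h12, h13⟩ := minChainCost_mem B x x''
    obtain ⟨l2, h21, h22, h23⟩ := minChainCost_mem B x'' x'
    rcases ht : l2.tail with _ | ⟨c, t⟩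
    · -- l2 = [x''], so x' = x''
      have hl2 : l2 = [x''] := by
        cases l2 with
        | nil => simp at h21
        | cons a s =>
          simp only [List.head?_cons, Option.some.injEq] at h21
          simp only [List.tail_cons] at ht
          rw [h21, ht]
      have hx : x' = x'' := by rw [hl2] at h22; exact (by simpa using h22 : x'' = x').symm
      rw [hx]
      exact le_max_left _ _
    · have hglue := listCost_glue B l1 l2 x'' h12 h21
      have hhead : (l1 ++ l2.tail).head? = some x := by
        cases l1 with
        | nil => simp at h11
        | cons a s => simpa using h11
      have h22' : l2.tail.getLast? = some x' := by
        cases l2 with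
        | nil => simp at h21
        | cons a s =>
          simp only [List.tail_cons] at ht ⊢
          rw [ht] at h22 ⊢
          rwa [List.getLast?_cons_cons] at h22
      have hlast : (l1 ++ l2.tail).getLast? = some x' := by
        rw [List.getLast?_append, h22']
        rfl
      calc uR A x x' ≤ listCost B (l1 ++ l2.tail) :=
            minChainCost_le B ⟨l1 ++ l2.tail, hhead, hlast, rfl⟩
        _ ≤ max (listCost B l1) (listCost B l2) := hglue
        _ = max (uR A x x'') (uR A x'' x') := by rw [huR x x'', huR x'' x', ← h13, ← h23]
  refine ⟨⟨⟨hnn, hsymm, hid, htri⟩, hdom⟩, ?_⟩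
  intro u hu hle x x'
  rw [huR]
  apply le_csInf (S_nonempty B x x')
  rintro c ⟨l, h1, h2, h3⟩
  exact h3 ▸ ultra_le_listCost hu hle l x x' h1 h2
end
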